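/- arXiv:2411.17671 — 3 statements merged into one kernel-verified Lean document; each statement's English description precedes it below -/
import Mathlib

section
/- Let M − λN be a 2×2 upper triangular pencil with distinct eigenvalues λ₁ = m₁₁/n₁₁ and λ₂ = m₂₂/n₂₂ (n₁₁, n₂₂ ≠ 0). Then there exist unitary 2×2 matrices Q and Z such that Q* M Z and Q* N Z are both upper triangular and the eigenvalues of the transformed pencil appear in swapped order: (Q*MZ)₁₁/(Q*NZ)₁₁ = λ₂ and (Q*MZ)₂₂/(Q*NZ)₂₂ = λ₁. -/
open Matrix Complex

noncomputable def Umat (p q : ℂ) : Matrix (Fin 2) (Fin 2) ℂ :=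
  let s : ℂ := (Real.sqrt (normSq p + normSq q) : ℝ)
  Matrix.of ![![p / s, -(starRingEnd ℂ) q / s], ![q / s, (starRingEnd ℂ) p / s]]

lemma sC_ne (p q : ℂ) (h : q ≠ 0) : ((Real.sqrt (normSq p + normSq q) : ℝ) : ℂ) ≠ 0 := by
  simp only [ne_eq, Complex.ofReal_eq_zero]
  have h1 := Complex.normSq_pos.2 h
  have h2 := Complex.normSq_nonneg p
  intro hc
  nlinarith [Real.sq_sqrt (by linarith : (0:ℝ) ≤ normSq p + normSq q),
    Real.sqrt_nonneg (normSq p + normSq q)]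

lemma Umat_unitary (p q : ℂ) (h : q ≠ 0) : Umat p q ∈ Matrix.unitaryGroup (Fin 2) ℂ := by
  rw [Matrix.mem_unitaryGroup_iff]
  have hs := sC_ne p q h
  have hsq : ((Real.sqrt (normSq p + normSq q) : ℝ) : ℂ) *
      ((Real.sqrt (normSq p + normSq q) : ℝ) : ℂ) = p * (starRingEnd ℂ) p + q * (starRingEnd ℂ) q := by
    rw [← Complex.ofReal_mul, Real.mul_self_sqrt (add_nonneg (Complex.normSq_nonneg p) (Complex.normSq_nonneg q))]
    push_cast [Complex.mul_conj]
    ring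
  ext i j
  fin_cases i <;> fin_cases j <;>
    simp only [Umat, Matrix.mul_apply, Fin.sum_univ_succ, Fin.sum_univ_zero, Matrix.one_apply,
      Matrix.star_apply, Matrix.of_apply, Matrix.cons_val', Matrix.cons_val_zero,
      Matrix.cons_val_one, Matrix.head_cons, Matrix.head_fin_const, Matrix.empty_val',
      Matrix.cons_val_fin_one, star_div₀, star_neg, Complex.star_def, map_div₀,
      Complex.conj_ofReal, Complex.conj_conj, add_zero]
  · norm_num; field_simp; linear_combination -hsq
  · norm_num; field_simp; ring
  · norm_num; field_simp; ring
  · norm_num; field_simp; linear_combination -hsq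

set_option maxHeartbeats 2000000 in
theorem stmt9 (M N : Matrix (Fin 2) (Fin 2) ℂ)
    (hM : M 1 0 = 0) (hN : N 1 0 = 0)
    (hN11 : N 0 0 ≠ 0) (hN22 : N 1 1 ≠ 0)
    (hdist : M 0 0 / N 0 0 ≠ M 1 1 / N 1 1) :
    ∃ Q Z : Matrix (Fin 2) (Fin 2) ℂ,
      Q ∈ Matrix.unitaryGroup (Fin 2) ℂ ∧ Z ∈ Matrix.unitaryGroup (Fin 2) ℂ ∧
      (Qᴴ * M * Z) 1 0 = 0 ∧ (Qᴴ * N * Z) 1 0 = 0 ∧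
      (Qᴴ * M * Z) 0 0 / (Qᴴ * N * Z) 0 0 = M 1 1 / N 1 1 ∧
      (Qᴴ * M * Z) 1 1 / (Qᴴ * N * Z) 1 1 = M 0 0 / N 0 0 := by
  set l : ℂ := M 1 1 / N 1 1 with hl
  set a : ℂ := l * N 0 1 - M 0 1 with ha
  set b : ℂ := M 0 0 - l * N 0 0 with hb'
  have hb : b ≠ 0 := by
    intro h
    rw [hb', sub_eq_zero] at h
    exact hdist (by rw [h, mul_div_cancel_right₀ _ hN11])
  set w1 : ℂ := N 0 0 * a + N 0 1 * b with hw1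
  set w2 : ℂ := N 1 1 * b with hw2
  have hw2' : w2 ≠ 0 := mul_ne_zero hN22 hb
  have hs := sC_ne a b hb
  have ht := sC_ne w1 w2 hw2'
  have habC : a * (starRingEnd ℂ) a + b * (starRingEnd ℂ) b ≠ 0 := by
    rw [Complex.mul_conj, Complex.mul_conj, ← Complex.ofReal_add]
    simp only [ne_eq, Complex.ofReal_eq_zero]
    have h1 := Complex.normSq_pos.2 hb
    have h2 := Complex.normSq_nonneg a
    intro hc; linarith
  have hwC : (starRingEnd ℂ) w1 * w1 + (starRingEnd ℂ) w2 * w2 ≠ 0 := by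
    rw [mul_comm _ w1, mul_comm _ w2, Complex.mul_conj, Complex.mul_conj, ← Complex.ofReal_add]
    simp only [ne_eq, Complex.ofReal_eq_zero]
    have h1 := Complex.normSq_pos.2 hw2'
    have h2 := Complex.normSq_nonneg w1
    intro hc; linarith
  have G1 : ((Umat w1 w2)ᴴ * M * Umat a b) 1 0 = 0 := by
    simp only [Umat, Matrix.conjTranspose_apply, Matrix.mul_apply, Fin.sum_univ_succ,
      Fin.sum_univ_zero, Matrix.of_apply, Matrix.cons_val', Matrix.cons_val_zero,
      Matrix.cons_val_one, Matrix.head_cons, Matrix.head_fin_const, Matrix.empty_val',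
      Matrix.cons_val_fin_one, star_div₀, star_neg, Complex.star_def, map_div₀,
      Complex.conj_ofReal, Complex.conj_conj, add_zero, Matrix.cons_val_succ,
      Fin.succ_zero_eq_one, map_neg, neg_div, neg_mul, hM]
    field_simp
    simp only [hw1, hw2, ha, hb', hl]
    field_simp
    ring
  have G2 : ((Umat w1 w2)ᴴ * N * Umat a b) 1 0 = 0 := by
    simp only [Umat, Matrix.conjTranspose_apply, Matrix.mul_apply, Fin.sum_univ_succ,
      Fin.sum_univ_zero, Matrix.of_apply, Matrix.cons_val', Matrix.cons_val_zero,
      Matrix.cons_val_one, Matrix.head_cons, Matrix.head_fin_const, Matrix.empty_val',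
      Matrix.cons_val_fin_one, star_div₀, star_neg, Complex.star_def, map_div₀,
      Complex.conj_ofReal, Complex.conj_conj, add_zero, Matrix.cons_val_succ,
      Fin.succ_zero_eq_one, map_neg, neg_div, neg_mul, hN]
    field_simp
    simp only [hw1, hw2, ha, hb', hl]
    field_simp
    ring
  have hden : ((Umat w1 w2)ᴴ * N * Umat a b) 0 0 =
      ((starRingEnd ℂ) w1 * w1 + (starRingEnd ℂ) w2 * w2) /
        (((Real.sqrt (normSq w1 + normSq w2) : ℝ) : ℂ) * ((Real.sqrt (normSq a + normSq b) : ℝ) : ℂ)) := by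
    simp only [Umat, Matrix.conjTranspose_apply, Matrix.mul_apply, Fin.sum_univ_succ,
      Fin.sum_univ_zero, Matrix.of_apply, Matrix.cons_val', Matrix.cons_val_zero,
      Matrix.cons_val_one, Matrix.head_cons, Matrix.head_fin_const, Matrix.empty_val',
      Matrix.cons_val_fin_one, star_div₀, star_neg, Complex.star_def, map_div₀,
      Complex.conj_ofReal, Complex.conj_conj, add_zero, Matrix.cons_val_succ,
      Fin.succ_zero_eq_one, map_neg, neg_div, neg_mul, hN]
    generalize (starRingEnd ℂ) w1 = c1
    generalize (starRingEnd ℂ) w2 = c2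
    field_simp
    simp only [hw1, hw2]
    ring
  have hnum : ((Umat w1 w2)ᴴ * M * Umat a b) 0 0 = l * (((Umat w1 w2)ᴴ * N * Umat a b) 0 0) := by
    rw [hden]
    simp only [Umat, Matrix.conjTranspose_apply, Matrix.mul_apply, Fin.sum_univ_succ,
      Fin.sum_univ_zero, Matrix.of_apply, Matrix.cons_val', Matrix.cons_val_zero,
      Matrix.cons_val_one, Matrix.head_cons, Matrix.head_fin_const, Matrix.empty_val',
      Matrix.cons_val_fin_one, star_div₀, star_neg, Complex.star_def, map_div₀,
      Complex.conj_ofReal, Complex.conj_conj, add_zero, Matrix.cons_val_succ,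
      Fin.succ_zero_eq_one, map_neg, neg_div, neg_mul, hM]
    generalize (starRingEnd ℂ) w1 = c1
    generalize (starRingEnd ℂ) w2 = c2
    field_simp
    simp only [hw1, hw2, ha, hb', hl]
    field_simp
    ring
  have hdenne : ((Umat w1 w2)ᴴ * N * Umat a b) 0 0 ≠ 0 := by
    rw [hden]
    exact div_ne_zero hwC (mul_ne_zero ht hs)
  have G3 : ((Umat w1 w2)ᴴ * M * Umat a b) 0 0 / (((Umat w1 w2)ᴴ * N * Umat a b) 0 0) = l := by
    rw [hnum, mul_div_assoc, div_self hdenne, mul_one]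
  have hM11e : ((Umat w1 w2)ᴴ * M * Umat a b) 1 1 =
      M 0 0 * (N 1 1 * (a * (starRingEnd ℂ) a + b * (starRingEnd ℂ) b)) /
        (((Real.sqrt (normSq w1 + normSq w2) : ℝ) : ℂ) * ((Real.sqrt (normSq a + normSq b) : ℝ) : ℂ)) := by
    simp only [Umat, Matrix.conjTranspose_apply, Matrix.mul_apply, Fin.sum_univ_succ,
      Fin.sum_univ_zero, Matrix.of_apply, Matrix.cons_val', Matrix.cons_val_zero,
      Matrix.cons_val_one, Matrix.head_cons, Matrix.head_fin_const, Matrix.empty_val',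
      Matrix.cons_val_fin_one, star_div₀, star_neg, Complex.star_def, map_div₀,
      Complex.conj_ofReal, Complex.conj_conj, add_zero, Matrix.cons_val_succ,
      Fin.succ_zero_eq_one, map_neg, neg_div, neg_mul, hM]
    generalize (starRingEnd ℂ) a = ca
    generalize (starRingEnd ℂ) b = cb
    field_simp
    simp only [hw1, hw2, ha, hb', hl]
    field_simp
    ring
  have hN11e : ((Umat w1 w2)ᴴ * N * Umat a b) 1 1 =
      N 0 0 * (N 1 1 * (a * (starRingEnd ℂ) a + b * (starRingEnd ℂ) b)) /
        (((Real.sqrt (normSq w1 + normSq w2) : ℝ) : ℂ) * ((Real.sqrt (normSq a + normSq b) : ℝ) : ℂ)) := by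
    simp only [Umat, Matrix.conjTranspose_apply, Matrix.mul_apply, Fin.sum_univ_succ,
      Fin.sum_univ_zero, Matrix.of_apply, Matrix.cons_val', Matrix.cons_val_zero,
      Matrix.cons_val_one, Matrix.head_cons, Matrix.head_fin_const, Matrix.empty_val',
      Matrix.cons_val_fin_one, star_div₀, star_neg, Complex.star_def, map_div₀,
      Complex.conj_ofReal, Complex.conj_conj, add_zero, Matrix.cons_val_succ,
      Fin.succ_zero_eq_one, map_neg, neg_div, neg_mul, hN]
    generalize (starRingEnd ℂ) a = ca
    generalize (starRingEnd ℂ) b = cb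
    field_simp
    simp only [hw1, hw2, ha, hb', hl]
    field_simp
    ring
  have G4 : ((Umat w1 w2)ᴴ * M * Umat a b) 1 1 / (((Umat w1 w2)ᴴ * N * Umat a b) 1 1) =
      M 0 0 / N 0 0 := by
    rw [hM11e, hN11e]
    rw [div_div_div_cancel_right₀]
    rw [div_eq_div_iff (mul_ne_zero hN11 (mul_ne_zero hN22 habC)) hN11]
    ring
    exact mul_ne_zero ht hs
  exact ⟨Umat w1 w2, Umat a b, Umat_unitary _ _ hw2', Umat_unitary _ _ hb, G1, G2, G3, G4⟩
end

section
/- Let A − λU be an n×n Hessenberg pencil, ρ ∈ ℂ, x = (A − ρU)e₁ ≠ 0, and let Q₁ be a core transformation acting on rows 1, 2 with Q₁* x = α e₁, α ≠ 0. Then Q₁*A and Q₁*U are upper Hessenberg, and the first pole of the pencil Q₁*A − λQ₁*U equals ρ, i.e., (Q₁*A)₂₁/(Q₁*U)₂₁ = ρ, provided (Q₁*U)₂₁ ≠ 0; moreover the remaining poles σ₂,…,σ_{n−1} are unchanged. -/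
open Matrix

def IsUpperHessenberg {n : ℕ} (M : Matrix (Fin n) (Fin n) ℂ) : Prop :=
  ∀ i j : Fin n, (j : ℕ) + 1 < (i : ℕ) → M i j = 0

/-- A core transformation acting on rows/columns `j`, `j+1` (0-based). -/
def IsCore {n : ℕ} (j : ℕ) (M : Matrix (Fin n) (Fin n) ℂ) : Prop :=
  M ∈ Matrix.unitaryGroup (Fin n) ℂ ∧
  ∀ i k : Fin n, (((i : ℕ) ≠ j ∧ (i : ℕ) ≠ j + 1) ∨ ((k : ℕ) ≠ j ∧ (k : ℕ) ≠ j + 1)) →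
    M i k = (1 : Matrix (Fin n) (Fin n) ℂ) i k

lemma core_mul_eq {n : ℕ} (Q : Matrix (Fin n) (Fin n) ℂ)
    (hQ2 : ∀ i k : Fin n, (((i : ℕ) ≠ 0 ∧ (i : ℕ) ≠ 1) ∨ ((k : ℕ) ≠ 0 ∧ (k : ℕ) ≠ 1)) →
      Q i k = (1 : Matrix (Fin n) (Fin n) ℂ) i k)
    (M : Matrix (Fin n) (Fin n) ℂ) (i j : Fin n) (hi : 2 ≤ (i : ℕ)) :
    (Qᴴ * M) i j = M i j := by
  rw [Matrix.mul_apply]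
  rw [Finset.sum_eq_single i]
  · rw [Matrix.conjTranspose_apply, hQ2 i i (Or.inr ⟨by omega, by omega⟩), Matrix.one_apply_eq]
    simp
  · intro k _ hk
    rw [Matrix.conjTranspose_apply, hQ2 k i (Or.inr ⟨by omega, by omega⟩),
      Matrix.one_apply_ne hk]
    simp
  · intro h; exact absurd (Finset.mem_univ i) h

/-- Move of type I at the top: inserting the pole `ρ`. -/
theorem stmt12 (n : ℕ) (hn : 2 ≤ n) (A U Q : Matrix (Fin n) (Fin n) ℂ)
    (hA : IsUpperHessenberg A) (hU : IsUpperHessenberg U)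
    (ρ : ℂ) (x : Fin n → ℂ)
    (hx : x = (A - ρ • U) *ᵥ (Pi.single ⟨0, by omega⟩ 1)) (hx0 : x ≠ 0)
    (hQ : IsCore 0 Q) (α : ℂ) (hα : α ≠ 0)
    (hQx : Qᴴ *ᵥ x = α • (Pi.single ⟨0, by omega⟩ 1 : Fin n → ℂ)) :
    IsUpperHessenberg (Qᴴ * A) ∧ IsUpperHessenberg (Qᴴ * U) ∧
    ((Qᴴ * U) ⟨1, by omega⟩ ⟨0, by omega⟩ ≠ 0 →
      (Qᴴ * A) ⟨1, by omega⟩ ⟨0, by omega⟩ / (Qᴴ * U) ⟨1, by omega⟩ ⟨0, by omega⟩ = ρ) ∧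
    (∀ i : ℕ, ∀ _ : 1 ≤ i, ∀ _ : i < n - 1,
      (Qᴴ * A) ⟨i + 1, by omega⟩ ⟨i, by omega⟩ / (Qᴴ * U) ⟨i + 1, by omega⟩ ⟨i, by omega⟩ =
        A ⟨i + 1, by omega⟩ ⟨i, by omega⟩ / U ⟨i + 1, by omega⟩ ⟨i, by omega⟩) := by
  obtain ⟨hQu, hQ2⟩ := hQ
  have aux := core_mul_eq Q hQ2
  refine ⟨?_, ?_, ?_, ?_⟩
  · intro i j hij
    rcases lt_or_ge (i : ℕ) 2 with h | h
    · omega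
    · rw [aux A i j h]; exact hA i j hij
  · intro i j hij
    rcases lt_or_ge (i : ℕ) 2 with h | h
    · omega
    · rw [aux U i j h]; exact hU i j hij
  · intro hne
    have key : Qᴴ *ᵥ x = (Qᴴ * (A - ρ • U)) *ᵥ (Pi.single ⟨0, by omega⟩ 1) := by
      rw [hx, mulVec_mulVec]
    have h1 : ((Qᴴ * (A - ρ • U)) *ᵥ (Pi.single ⟨0, by omega⟩ 1 : Fin n → ℂ))
        ⟨1, by omega⟩ = (Qᴴ * (A - ρ • U)) ⟨1, by omega⟩ ⟨0, by omega⟩ := by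
      rw [Matrix.mulVec_single]
      simp
    have h2 : (Qᴴ *ᵥ x) ⟨1, by omega⟩ = 0 := by
      rw [hQx]
      have : (⟨1, by omega⟩ : Fin n) ≠ ⟨0, by omega⟩ := by
        intro h; exact absurd (congrArg Fin.val h) (by simp)
      simp [Pi.single_eq_of_ne this]
    have h3 : (Qᴴ * (A - ρ • U)) ⟨1, by omega⟩ ⟨0, by omega⟩ = 0 := by
      rw [← h1, ← key, h2]
    rw [Matrix.mul_sub, Matrix.mul_smul] at h3
    simp only [Matrix.sub_apply, Matrix.smul_apply, smul_eq_mul, sub_eq_zero] at h3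
    rw [h3]
    field_simp
  · intro i hi1 hi2
    rw [aux A _ _ (by simp; omega), aux U _ _ (by simp; omega)]
end

section
/- Let V ∈ ℂ^{3×3} be unitary with v₃₁ = 0. Then V = A₁B₂ for some core transformations A₁ (acting on rows 1,2) and B₂ (acting on rows 2,3). -/
open Matrix

theorem stmt15 (V : Matrix (Fin 3) (Fin 3) ℂ)
    (hV : V ∈ Matrix.unitaryGroup (Fin 3) ℂ) (h31 : V 2 0 = 0) :
    ∃ A₁ B₂ : Matrix (Fin 3) (Fin 3) ℂ, IsCore 0 A₁ ∧ IsCore 1 B₂ ∧ V = A₁ * B₂ := by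
  obtain ⟨a, b, ha, hb⟩ : ∃ a b : ℂ, V 0 0 = a ∧ V 1 0 = b := ⟨_, _, rfl, rfl⟩
  have hVs : star V * V = 1 := hV.1
  have h1 : (starRingEnd ℂ) a * a + (starRingEnd ℂ) b * b = 1 := by
    have := congrFun (congrFun hVs 0) 0
    simpa [Matrix.mul_apply, Fin.sum_univ_three, Matrix.one_apply, h31, ha, hb,
      Matrix.star_apply] using this
  set A₁ : Matrix (Fin 3) (Fin 3) ℂ :=
    !![a, -(starRingEnd ℂ) b, 0; b, (starRingEnd ℂ) a, 0; 0, 0, 1] with hA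
  have hAu : star A₁ * A₁ = 1 := by
    ext i k
    fin_cases i <;> fin_cases k <;>
      simp [hA, Matrix.mul_apply, Fin.sum_univ_three, Matrix.one_apply, Matrix.star_apply] <;>
      first
      | ring1
      | linear_combination h1
  have hAmem : A₁ ∈ Matrix.unitaryGroup (Fin 3) ℂ := Matrix.mem_unitaryGroup_iff'.mpr hAu
  have hAu' : A₁ * star A₁ = 1 := hAmem.2
  set B₂ : Matrix (Fin 3) (Fin 3) ℂ := star A₁ * V with hBdef
  have hBmem : B₂ ∈ Matrix.unitaryGroup (Fin 3) ℂ :=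
    mul_mem (Unitary.star_mem hAmem) hV
  have hBs : star B₂ * B₂ = 1 := hBmem.1
  have hB00 : B₂ 0 0 = 1 := by
    simp [hBdef, hA, Matrix.mul_apply, Fin.sum_univ_three, Matrix.star_apply, h31, ha, hb]
    linear_combination h1
  have hB10 : B₂ 1 0 = 0 := by
    simp [hBdef, hA, Matrix.mul_apply, Fin.sum_univ_three, Matrix.star_apply, h31, ha, hb]
    ring
  have hB20 : B₂ 2 0 = 0 := by
    simp [hBdef, hA, Matrix.mul_apply, Fin.sum_univ_three, Matrix.star_apply, h31]
  have hB01 : B₂ 0 1 = 0 := by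
    have := congrFun (congrFun hBs 0) 1
    simpa [Matrix.mul_apply, Fin.sum_univ_three, Matrix.one_apply, Matrix.star_apply,
      hB00, hB10, hB20] using this
  have hB02 : B₂ 0 2 = 0 := by
    have := congrFun (congrFun hBs 0) 2
    simpa [Matrix.mul_apply, Fin.sum_univ_three, Matrix.one_apply, Matrix.star_apply,
      hB00, hB10, hB20] using this
  refine ⟨A₁, B₂, ⟨hAmem, ?_⟩, ⟨hBmem, ?_⟩, ?_⟩
  · intro i k h
    fin_cases i <;> fin_cases k <;>
      first
      | (simp [hA, Matrix.one_apply]; done)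
      | (exfalso; revert h; decide)
  · intro i k h
    fin_cases i <;> fin_cases k <;>
      first
      | (simp [Matrix.one_apply, hB00, hB10, hB20, hB01, hB02]; done)
      | (exfalso; revert h; decide)
  · rw [hBdef, ← Matrix.mul_assoc, hAu', Matrix.one_mul]
end
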